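/- Let Σ₀, Σ₁ be symmetric positive definite d×d matrices and define T = Σ₀^{-1/2} (Σ₀^{1/2} Σ₁ Σ₀^{1/2})^{1/2} Σ₀^{-1/2}. Then T is symmetric positive definite, and T equals Σ₁^{1/2} V Uᵀ Σ₀^{-1/2}, where Σ₀^{1/2}Σ₁^{1/2} = UΛVᵀ is a singular value decomposition. -/

import Mathlib

open Matrix

/-- The positive semidefinite square root (Mathlib's former `Matrix.PosSemidef.sqrt`,
removed upstream), restored with its old definition. -/
noncomputable def Matrix.PosSemidef.sqrt {n 𝕜 : Type*} [Fintype n] [RCLike 𝕜] [PartialOrder 𝕜] [StarOrderedRing 𝕜] [DecidableEq n]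
    {A : Matrix n n 𝕜} (hA : A.PosSemidef) : Matrix n n 𝕜 :=
  hA.isHermitian.eigenvectorUnitary.1 * diagonal (fun i => ((Real.sqrt (hA.isHermitian.eigenvalues i) : ℝ) : 𝕜)) *
  (star hA.isHermitian.eigenvectorUnitary : Matrix n n 𝕜)

open scoped MatrixOrder in
private lemma sqrt_eq_cfc_sqrt {n : Type*} [Fintype n] [DecidableEq n]
    {A : Matrix n n ℝ} (hA : A.PosSemidef) : hA.sqrt = CFC.sqrt A := by
  rw [CFC.sqrt_eq_cfc, cfc_nnreal_eq_real _ A hA.nonneg, hA.1.cfc_eq]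
  simp only [IsHermitian.cfc, Matrix.PosSemidef.sqrt, Unitary.conjStarAlgAut_apply]
  congr 2
  ext i j
  simp [diagonal_apply, Function.comp_apply, max_eq_left (hA.eigenvalues_nonneg i)]

open scoped MatrixOrder in
lemma Matrix.PosSemidef.posSemidef_sqrt {n : Type*} [Fintype n] [DecidableEq n]
    {A : Matrix n n ℝ} (hA : A.PosSemidef) : hA.sqrt.PosSemidef := by
  rw [sqrt_eq_cfc_sqrt]; exact (CFC.sqrt_nonneg A).posSemidef

open scoped MatrixOrder in
lemma Matrix.PosSemidef.sqrt_mul_self {n : Type*} [Fintype n] [DecidableEq n]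
    {A : Matrix n n ℝ} (hA : A.PosSemidef) : hA.sqrt * hA.sqrt = A := by
  rw [sqrt_eq_cfc_sqrt]; exact CFC.sqrt_mul_sqrt_self A hA.nonneg

open scoped MatrixOrder in
lemma Matrix.PosSemidef.eq_sqrt_of_sq_eq {n : Type*} [Fintype n] [DecidableEq n]
    {A : Matrix n n ℝ} (hA : A.PosSemidef) {B : Matrix n n ℝ} (hB : B.PosSemidef)
    (hAB : A ^ 2 = B) : A = hB.sqrt := by
  rw [sqrt_eq_cfc_sqrt, eq_comm, CFC.sqrt_eq_iff B A hB.nonneg hA.nonneg, ← sq, hAB]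

private lemma ctr_real {m n : Type*} (A : Matrix m n ℝ) : Aᴴ = Aᵀ := by
  ext i j; simp [conjTranspose_apply]

private lemma posDef_of_posSemidef_isUnit {n : Type*} [Fintype n] [DecidableEq n]
    {A : Matrix n n ℝ} (hA : A.PosSemidef) (h : IsUnit A) : A.PosDef := by
  refine ⟨hA.1, fun x hx => ?_⟩
  rcases (hA.2 x).lt_or_eq with h' | h'
  · exact h'
  · exfalso
    have h0 : A *ᵥ x = 0 := (hA.dotProduct_mulVec_zero_iff x).mp (by
      simpa [dotProduct, mulVec, Finsupp.sum_fintype, Finset.mul_sum, mul_assoc] using h'.symm)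
    have hinj := Matrix.mulVec_injective_iff_isUnit.mpr h
    exact hx (Finsupp.coe_eq_zero.mp (hinj (a₁ := ⇑x) (a₂ := 0) (by simpa using h0)))

/-- `T = Σ₀^{-1/2}(Σ₀^{1/2} Σ₁ Σ₀^{1/2})^{1/2}Σ₀^{-1/2}` is symmetric positive definite
and equals `Σ₁^{1/2} V Uᵀ Σ₀^{-1/2}` where `Σ₀^{1/2}Σ₁^{1/2} = UΛVᵀ` is an SVD. -/
theorem stmt_9 (d : ℕ) (Sig₀ Sig₁ : Matrix (Fin d) (Fin d) ℝ)
    (hSig₀ : Sig₀.PosDef) (hSig₁ : Sig₁.PosDef)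
    (S₀ S₁ : Matrix (Fin d) (Fin d) ℝ)
    (hS₀ : S₀ = hSig₀.posSemidef.sqrt) (hS₁ : S₁ = hSig₁.posSemidef.sqrt)
    (U V : Matrix (Fin d) (Fin d) ℝ) (σ : Fin d → ℝ)
    (hU : U * Uᵀ = 1) (hV : V * Vᵀ = 1) (hσ : ∀ i, 0 ≤ σ i)
    (hSVD : S₀ * S₁ = U * Matrix.diagonal σ * Vᵀ)
    (hP : (S₀ * Sig₁ * S₀).PosSemidef)
    (T : Matrix (Fin d) (Fin d) ℝ) (hT : T = S₀⁻¹ * hP.sqrt * S₀⁻¹) :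
    Tᵀ = T ∧ T.PosDef ∧ T = S₁ * V * Uᵀ * S₀⁻¹ := by
  have hS₀psd : S₀.PosSemidef := hS₀ ▸ hSig₀.posSemidef.posSemidef_sqrt
  have hS₁psd : S₁.PosSemidef := hS₁ ▸ hSig₁.posSemidef.posSemidef_sqrt
  have hS₀sym : S₀ᵀ = S₀ := by rw [← ctr_real]; exact hS₀psd.1
  have hS₁sym : S₁ᵀ = S₁ := by rw [← ctr_real]; exact hS₁psd.1
  have hS₀sq : S₀ * S₀ = Sig₀ := hS₀ ▸ hSig₀.posSemidef.sqrt_mul_self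
  have hS₁sq : S₁ * S₁ = Sig₁ := hS₁ ▸ hSig₁.posSemidef.sqrt_mul_self
  have hdetS₀ : IsUnit S₀.det := by
    have : S₀.det * S₀.det = Sig₀.det := by rw [← det_mul, hS₀sq]
    exact isUnit_of_mul_isUnit_left (this ▸ hSig₀.det_pos.ne'.isUnit)
  have hS₀inv : S₀⁻¹ * S₀ = 1 := nonsing_inv_mul S₀ hdetS₀
  have hS₀inv' : S₀ * S₀⁻¹ = 1 := mul_nonsing_inv S₀ hdetS₀
  have hS₀invsym : (S₀⁻¹)ᵀ = S₀⁻¹ := by rw [transpose_nonsing_inv, hS₀sym]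
  have hUtU : Uᵀ * U = 1 := mul_eq_one_comm.mp hU
  have hVtV : Vᵀ * V = 1 := mul_eq_one_comm.mp hV
  set Λ : Matrix (Fin d) (Fin d) ℝ := Matrix.diagonal σ with hΛ
  have hΛt : Λᵀ = Λ := diagonal_transpose σ
  -- the candidate square root
  set B : Matrix (Fin d) (Fin d) ℝ := U * Λ * Uᵀ with hBdef
  have hB : B.PosSemidef := by
    have hd : Λ.PosSemidef := posSemidef_diagonal_iff.mpr hσ
    have := hd.mul_mul_conjTranspose_same U
    rwa [ctr_real] at this
  have hS₁S₀ : S₁ * S₀ = V * Λ * Uᵀ := by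
    have := congrArg Matrix.transpose hSVD
    simpa [transpose_mul, hS₀sym, hS₁sym, hΛt, Matrix.mul_assoc] using this
  have key : S₀ * Sig₁ * S₀ = U * (Λ * Λ) * Uᵀ := by
    calc S₀ * Sig₁ * S₀ = (S₀ * S₁) * (S₁ * S₀) := by
          rw [← hS₁sq]; simp only [Matrix.mul_assoc]
      _ = (U * Λ * Vᵀ) * (V * Λ * Uᵀ) := by rw [hSVD, hS₁S₀]
      _ = U * (Λ * Λ) * Uᵀ := by
          simp only [Matrix.mul_assoc]
          rw [← Matrix.mul_assoc Vᵀ V, hVtV, Matrix.one_mul]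
  have hB2 : B ^ 2 = S₀ * Sig₁ * S₀ := by
    rw [key, pow_two, hBdef]
    simp only [Matrix.mul_assoc]
    rw [← Matrix.mul_assoc Uᵀ U, hUtU, Matrix.one_mul]
  have hsqrt : hP.sqrt = B := (hB.eq_sqrt_of_sq_eq hP hB2).symm
  have hTB : T = S₀⁻¹ * B * S₀⁻¹ := by rw [hT, hsqrt]
  have hBsym : Bᵀ = B := by rw [← ctr_real]; exact hB.1
  have hTsym : Tᵀ = T := by
    rw [hTB, transpose_mul, transpose_mul, hS₀invsym, hBsym]
    simp only [hBdef, Matrix.mul_assoc]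
  refine ⟨hTsym, ?_, ?_⟩
  · -- PosDef
    have hTpsd : T.PosSemidef := by
      have := hB.conjTranspose_mul_mul_same (S₀⁻¹)
      rw [ctr_real, hS₀invsym] at this
      rwa [hTB]
    have hdetB : IsUnit B.det := by
      have h2 : IsUnit (B.det * B.det) := by
        rw [← det_mul, ← pow_two, hB2]
        simp only [det_mul]
        exact (hdetS₀.mul hSig₁.det_pos.ne'.isUnit).mul hdetS₀
      exact isUnit_of_mul_isUnit_left h2
    have hdetS₀i : IsUnit (S₀⁻¹).det := by
      rw [det_nonsing_inv]; exact isUnit_ringInverse.mpr hdetS₀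
    have hdetT : IsUnit T.det := by
      rw [hTB]
      simp only [det_mul]
      exact (hdetS₀i.mul hdetB).mul hdetS₀i
    exact posDef_of_posSemidef_isUnit hTpsd (isUnit_iff_isUnit_det T |>.mpr hdetT)
  · -- T = S₁ * V * Uᵀ * S₀⁻¹
    have hS₁eq : S₁ = S₀⁻¹ * (U * Λ * Vᵀ) := by
      rw [← hSVD, ← Matrix.mul_assoc, hS₀inv, Matrix.one_mul]
    rw [hTB, hS₁eq]
    simp only [hBdef, Matrix.mul_assoc]
    rw [← Matrix.mul_assoc Vᵀ V, hVtV, Matrix.one_mul]
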